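/- Define \lambda_t on ab-monomials by \lambda_t(b^m) = (a-b)^m, \lambda_t(b^m a) = (a-b)^{m+1}, and 0 otherwise. Then for a graded poset P of rank at least 1, \lambda_t(\Psi(P)) = Z_t(P) \cdot (a-b)^{\rho(P)-1}, where Z_t(P) = (-1)^{\rho(P)-1} \sum_{x \text{ coatom of } P} \mu(\hat{0},x). -/

import Mathlib

open Finset

/-- The ring `ℤ⟨a,b⟩` of noncommutative polynomials in the variables `a` and `b`,
realized as the monoid algebra of the free monoid on two letters
(`false` encodes the letter `a` and `true` the letter `b`). -/
abbrev AB : Type := MonoidAlgebra ℤ (FreeMonoid Bool)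

/-- The variable `a`. -/
noncomputable def aV : AB := MonoidAlgebra.single (FreeMonoid.ofList [false]) 1

/-- The variable `b`. -/
noncomputable def bV : AB := MonoidAlgebra.single (FreeMonoid.ofList [true]) 1

/-- The `ab`-monomial `u_S` of degree `n`, with `b` in the positions of `S`. -/
def word (n : ℕ) (S : Finset ℕ) : FreeMonoid Bool :=
  FreeMonoid.ofList (List.ofFn fun i : Fin n => decide ((i : ℕ) + 1 ∈ S))

/-- The flag `f`-vector entry `f_S`. -/
noncomputable def flagF (P : Type*) [PartialOrder P] (ρ : P → ℕ) (S : Finset ℕ) : ℤ :=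
  ({c : Finset P | IsChain (· ≤ ·) (↑c : Set P) ∧ c.image ρ = S} : Set (Finset P)).ncard

/-- The flag `h`-vector entry `h_S`. -/
noncomputable def flagH (P : Type*) [PartialOrder P] (ρ : P → ℕ) (S : Finset ℕ) : ℤ :=
  ∑ T ∈ S.powerset, (-1) ^ (S.card - T.card) * flagF P ρ T

/-- The `ab`-index `Ψ(P) = ∑_S h_S u_S` of a poset `P` of rank `n+1` with rank
function `ρ` (the elements of ranks `1,…,n` are the proper part of `P`). -/
noncomputable def Psi (P : Type*) [PartialOrder P] (ρ : P → ℕ) (n : ℕ) : AB :=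
  ∑ S ∈ (Finset.Icc 1 n).powerset, MonoidAlgebra.single (word n S) (flagH P ρ S)


open scoped Classical

/-- Extend a function on `ab`-monomials linearly to all of `ℤ⟨a,b⟩`. -/
noncomputable def extendMon (g : List Bool → AB) : AB → AB := fun w =>
  w.coeff.sum fun m c => c • g (FreeMonoid.toList m)

/-- The Möbius function of a finite poset. -/
noncomputable def muP (P : Type*) [PartialOrder P] [Fintype P] (x y : P) : ℤ :=
  letI := Classical.decEq P
  letI : DecidableRel (α := P) (· < ·) := Classical.decRel _
  letI : DecidableRel (α := P) (· ≤ ·) := Classical.decRel _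
  letI := Fintype.toLocallyFiniteOrder (α := P)
  IncidenceAlgebra.mu ℤ x y

/-- The map `λ_t`, sending `b^m ↦ (a-b)^m`, `b^m a ↦ (a-b)^{m+1}`, and all other
monomials to `0`. -/
noncomputable def lambdatMon (l : List Bool) : AB :=
  if ∃ m : ℕ, l = List.replicate m true ∨ l = List.replicate m true ++ [false] then
    (aV - bV) ^ l.length
  else 0

/-!
Only the monomials `b^n = u_{[n]}` and `b^{n-1} a = u_{[n-1]}` survive `λ_t`, so `λ_t(Ψ(P))` is
`(h_{[n]} + h_{[n-1]}) (a-b)^n` (just `h_∅` when `n = 0`). Peeling the top element off each chain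
and applying Philip Hall's theorem `μ(0̂, x) = χ̃(Δ(0̂, x))` gives
`h_{[k]} = (-1)^k (1 + ∑_{1 ≤ ρ(x) ≤ k} μ(0̂, x))`; in `h_{[n]} + h_{[n-1]}` everything cancels
except `(-1)^n` times the sum over the elements of rank `n`, which are the coatoms.
-/

noncomputable def chainsIn {P : Type*} [PartialOrder P] (s : Finset P) : Finset (Finset P) :=
  s.powerset.filter fun c => IsChain (· ≤ ·) (c : Set P)

section ChainSums
variable {P : Type*} [PartialOrder P]

/-- The reduced Euler characteristic of the order complex of `s`: its faces are the chains of `s`,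
a chain with `k` elements being a face of dimension `k - 1`. -/
noncomputable def reducedEulerChar (s : Finset P) : ℤ :=
  -∑ c ∈ chainsIn s, (-1) ^ #c

lemma mem_chainsIn {s c : Finset P} : c ∈ chainsIn s ↔ c ⊆ s ∧ IsChain (· ≤ ·) (c : Set P) := by
  rw [chainsIn, mem_filter, mem_powerset]

lemma IsChain.exists_isGreatest_of_finset {c : Finset P} (hc : IsChain (· ≤ ·) (c : Set P))
    (hne : c.Nonempty) : ∃ x, IsGreatest (c : Set P) x := by
  obtain ⟨x, hx, hmax⟩ := c.exists_maximal hne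
  exact ⟨x, hx, hc.directedOn.is_top_of_is_max hx fun y hy => hmax hy⟩

lemma card_image_of_isChain {ρ : P → ℕ} (hρ : StrictMono ρ) {c : Finset P}
    (hc : IsChain (· ≤ ·) (c : Set P)) : #(c.image ρ) = #c := by
  refine card_image_of_injOn fun x hx y hy hxy => ?_
  rcases hc.total hx hy with h | h
  · exact h.eq_or_lt.resolve_right fun hlt => (hρ hlt).ne hxy
  · exact (h.eq_or_lt.resolve_right fun hlt => (hρ hlt).ne hxy.symm).symm

lemma reducedEulerChar_eq_neg_one_sub (s : Finset P) :
    reducedEulerChar s = -1 - ∑ x ∈ s, reducedEulerChar (s.filter (· < x)) := by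
  have hsplit : chainsIn s = insert ∅ ((chainsIn s).filter Finset.Nonempty) := by
    ext c
    by_cases hc : c.Nonempty
    · simp [hc, c.nonempty_iff_ne_empty.1 hc]
    · simp [not_nonempty_iff_eq_empty.1 hc, mem_chainsIn]
  have hpeel : ∑ c ∈ (chainsIn s).filter Finset.Nonempty, (-1 : ℤ) ^ #c =
      ∑ x ∈ s, ∑ c ∈ chainsIn (s.filter (· < x)), -(-1) ^ #c := by
    have hlt : ∀ p ∈ s.sigma fun x => chainsIn (s.filter (· < x)), ∀ y ∈ p.2, y < p.1 :=
      fun p hp y hy => (mem_filter.1 ((mem_chainsIn.1 (mem_sigma.1 hp).2).1 hy)).2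
    have hnotMem : ∀ p ∈ s.sigma fun x => chainsIn (s.filter (· < x)), p.1 ∉ p.2 :=
      fun p hp h => lt_irrefl _ (hlt p hp _ h)
    have hgreatest : ∀ p ∈ s.sigma fun x => chainsIn (s.filter (· < x)),
        IsGreatest (↑(insert p.1 p.2) : Set P) p.1 := fun p hp =>
      ⟨mem_insert_self _ _, fun y hy => (mem_insert.1 hy).elim le_of_eq fun h => (hlt p hp y h).le⟩
    rw [← sum_sigma s (fun x => chainsIn (s.filter (· < x))) fun p => -(-1 : ℤ) ^ #p.2]
    symm
    refine sum_bij (fun p _ => insert p.1 p.2) ?_ ?_ ?_ ?_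
    · intro p hp
      obtain ⟨hx, hc⟩ := mem_sigma.1 hp
      refine mem_filter.2 ⟨mem_chainsIn.2 ⟨insert_subset hx ?_, ?_⟩, insert_nonempty _ _⟩
      · exact (mem_chainsIn.1 hc).1.trans (filter_subset _ _)
      · rw [coe_insert]
        exact (mem_chainsIn.1 hc).2.insert fun y hy _ => Or.inr (hlt p hp y hy).le
    · rintro ⟨x, c⟩ hxc ⟨y, d⟩ hyd h
      have hxy : x = y := (hgreatest _ hxc).unique (h ▸ hgreatest _ hyd)
      subst hxy
      have hcd := congrArg (·.erase x) h
      simp only [erase_insert (hnotMem _ hxc), erase_insert (hnotMem _ hyd)] at hcd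
      rw [hcd]
    · intro c hc
      obtain ⟨hc, hne⟩ := mem_filter.1 hc
      obtain ⟨hcs, hchain⟩ := mem_chainsIn.1 hc
      obtain ⟨x, hxc, hxmax⟩ := hchain.exists_isGreatest_of_finset hne
      refine ⟨⟨x, c.erase x⟩, ?_, insert_erase hxc⟩
      simp only [mem_sigma, mem_chainsIn]
      refine ⟨hcs hxc, fun y hy => ?_, hchain.mono (erase_subset x c)⟩
      obtain ⟨hyx, hyc⟩ := mem_erase.1 hy
      exact mem_filter.2 ⟨hcs hyc, lt_of_le_of_ne (hxmax hyc) hyx⟩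
    · intro p hp
      rw [card_insert_of_notMem (hnotMem p hp), pow_succ, mul_neg_one]
  rw [reducedEulerChar, hsplit, sum_insert (by simp), hpeel]
  simp only [reducedEulerChar, card_empty, pow_zero, sum_neg_distrib]
  ring

end ChainSums

section Mobius
variable {P : Type*} [Fintype P] [PartialOrder P]

lemma muP_self (a : P) : muP P a a = 1 := by
  simp [muP]

lemma muP_eq_neg_one_sub_sum {a x : P} (h : a < x) :
    muP P a x = -1 - ∑ z ∈ univ.filter (fun z => a < z ∧ z < x), muP P a z := by
  unfold muP
  let := Fintype.toLocallyFiniteOrder (α := P)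
  have hIco : Ico a x = insert a (univ.filter fun z => a < z ∧ z < x) := by
    ext z
    simp only [mem_Ico, mem_insert, mem_filter, mem_univ, true_and, le_iff_eq_or_lt (a := a)]
    constructor
    · rintro ⟨rfl | haz, hzx⟩
      exacts [Or.inl rfl, Or.inr ⟨haz, hzx⟩]
    · rintro (rfl | ⟨haz, hzx⟩)
      exacts [⟨Or.inl rfl, h⟩, ⟨Or.inr haz, hzx⟩]
  rw [IncidenceAlgebra.mu_eq_neg_sum_Ico_of_ne h.ne, hIco, sum_insert (by simp),
    IncidenceAlgebra.mu_self, neg_add, sub_eq_add_neg]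

theorem muP_eq_reducedEulerChar {a x : P} (h : a < x) :
    muP P a x = reducedEulerChar (univ.filter fun z => a < z ∧ z < x) := by
  induction x using WellFoundedLT.induction with
  | ind x ih =>
    rw [muP_eq_neg_one_sub_sum h, reducedEulerChar_eq_neg_one_sub]
    congr 1
    refine sum_congr rfl fun z hz => ?_
    obtain ⟨haz, hzx⟩ := (mem_filter.1 hz).2
    rw [ih z hzx haz]
    congr 1
    ext y
    simp only [mem_filter, mem_univ, true_and]
    exact ⟨fun hy => ⟨⟨hy.1, hy.2.trans hzx⟩, hy.2⟩, fun hy => ⟨hy.1.1, hy.2⟩⟩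

end Mobius

section FlagVector
variable {P : Type*} [Fintype P] [PartialOrder P] {ρ : P → ℕ}

lemma flagF_eq_card_filter_chainsIn {S T : Finset ℕ} (hT : T ⊆ S) :
    flagF P ρ T = #((chainsIn (univ.filter fun x => ρ x ∈ S)).filter fun c => c.image ρ = T) := by
  rw [flagF, ← Set.ncard_coe_finset]
  congr 2
  ext c
  simp only [Set.mem_ofPred_eq, coe_filter, mem_chainsIn]
  refine ⟨fun ⟨hc, himg⟩ => ⟨⟨fun x hx => ?_, hc⟩, himg⟩, fun ⟨⟨_, hc⟩, himg⟩ => ⟨hc, himg⟩⟩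
  exact mem_filter.2 ⟨mem_univ x, hT (himg ▸ mem_image_of_mem ρ hx)⟩

theorem flagH_eq_reducedEulerChar (hρ : StrictMono ρ) (S : Finset ℕ) :
    flagH P ρ S = -(-1) ^ #S * reducedEulerChar (univ.filter fun x => ρ x ∈ S) := by
  have himg : ∀ c ∈ chainsIn (univ.filter fun x => ρ x ∈ S), c.image ρ ∈ S.powerset := by
    intro c hc
    refine mem_powerset.2 fun k hk => ?_
    obtain ⟨x, hx, rfl⟩ := mem_image.1 hk
    exact (mem_filter.1 ((mem_chainsIn.1 hc).1 hx)).2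
  rw [flagH, reducedEulerChar, mul_neg, neg_mul, neg_neg, mul_sum,
    ← sum_fiberwise_of_maps_to himg]
  refine sum_congr rfl fun T hT => ?_
  have hTS := mem_powerset.1 hT
  have hsign : ∀ c ∈ (chainsIn (univ.filter fun x => ρ x ∈ S)).filter (fun c => c.image ρ = T),
      (-1 : ℤ) ^ #S * (-1) ^ #c = (-1) ^ (#S - #T) := by
    intro c hc
    obtain ⟨hchain, rfl⟩ := mem_filter.1 hc
    have hle := card_le_card hTS
    rw [card_image_of_isChain hρ (mem_chainsIn.1 hchain).2] at hle ⊢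
    rw [← pow_add, ← Nat.sub_add_cancel hle, add_assoc, pow_add, Even.neg_one_pow ⟨_, rfl⟩,
      mul_one, Nat.add_sub_cancel]
  rw [flagF_eq_card_filter_chainsIn hTS, sum_congr rfl hsign, sum_const, nsmul_eq_mul, mul_comm]

end FlagVector

section Graded
variable {P : Type*} [Fintype P] [PartialOrder P] {ρ : P → ℕ}

omit [Fintype P] in
lemma covBy_iff_rank_eq_add_one (hρ : StrictMono ρ)
    (hcov : ∀ x y : P, x ⋖ y → ρ y = ρ x + 1) {x y : P} (hxy : x ≤ y) :
    x ⋖ y ↔ ρ y = ρ x + 1 := by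
  refine ⟨hcov x y, fun h => ⟨hxy.lt_of_ne ?_, fun z hxz hzy => ?_⟩⟩
  · rintro rfl
    omega
  · have := hρ hxz
    have := hρ hzy
    omega

omit [PartialOrder P] in
lemma sum_filter_rank_mem_Icc_succ (f : P → ℤ) (k : ℕ) :
    ∑ x ∈ univ.filter (fun x => ρ x ∈ Icc 1 (k + 1)), f x =
      ∑ x ∈ univ.filter (fun x => ρ x ∈ Icc 1 k), f x +
        ∑ x ∈ univ.filter (fun x => ρ x = k + 1), f x := by
  rw [← sum_union (disjoint_filter.2 fun x _ h1 h2 => by rw [mem_Icc] at h1; omega)]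
  congr 1
  ext x
  simp only [mem_filter, mem_univ, true_and, mem_union, mem_Icc]
  omega

variable [OrderBot P]

lemma filter_rank_mem_Icc_filter_lt (hρ : StrictMono ρ) (hbot : ρ ⊥ = 0) {k : ℕ} {x : P}
    (hx : ρ x ≤ k + 1) :
    (univ.filter fun z => ρ z ∈ Icc 1 k).filter (· < x) = univ.filter fun z => ⊥ < z ∧ z < x := by
  ext z
  simp only [mem_filter, mem_univ, true_and, mem_Icc]
  constructor
  · rintro ⟨⟨hz, -⟩, hzx⟩
    refine ⟨bot_lt_iff_ne_bot.2 ?_, hzx⟩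
    rintro rfl
    omega
  · rintro ⟨hz, hzx⟩
    have := hρ hz
    have := hρ hzx
    exact ⟨by omega, hzx⟩

theorem flagH_Icc (hρ : StrictMono ρ) (hbot : ρ ⊥ = 0) (k : ℕ) :
    flagH P ρ (Icc 1 k) =
      (-1) ^ k * (1 + ∑ x ∈ univ.filter (fun x => ρ x ∈ Icc 1 k), muP P ⊥ x) := by
  have hmu : ∀ x ∈ univ.filter (fun x => ρ x ∈ Icc 1 k),
      reducedEulerChar ((univ.filter fun z => ρ z ∈ Icc 1 k).filter (· < x)) = muP P ⊥ x := by
    intro x hx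
    have hx := mem_Icc.1 (mem_filter.1 hx).2
    have hbotx : ⊥ < x := bot_lt_iff_ne_bot.2 fun h => by rw [h] at hx; omega
    rw [filter_rank_mem_Icc_filter_lt hρ hbot (by omega), muP_eq_reducedEulerChar hbotx]
  rw [flagH_eq_reducedEulerChar hρ, Nat.card_Icc, Nat.add_sub_cancel,
    reducedEulerChar_eq_neg_one_sub, sum_congr rfl hmu]
  ring

variable [OrderTop P] (hρ : StrictMono ρ) (hbot : ρ ⊥ = 0)
  (hcov : ∀ x y : P, x ⋖ y → ρ y = ρ x + 1)
include hρ hbot hcov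

theorem flagH_Icc_zero (htop : ρ ⊤ = 1) :
    flagH P ρ (Icc 1 0) = ∑ x ∈ univ.filter (· ⋖ ⊤), muP P ⊥ x := by
  have hcoatoms : univ.filter (· ⋖ ⊤) = {(⊥ : P)} := by
    ext x
    rw [mem_filter, mem_singleton, covBy_iff_rank_eq_add_one hρ hcov le_top, htop]
    refine ⟨fun h => ?_, fun h => ⟨mem_univ x, by rw [h, hbot]⟩⟩
    by_contra hx
    have := hρ (bot_lt_iff_ne_bot.2 hx)
    omega
  rw [flagH_Icc hρ hbot, hcoatoms, sum_singleton, muP_self]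
  simp

theorem flagH_Icc_succ_add_flagH_Icc {m : ℕ} (htop : ρ ⊤ = m + 2) :
    flagH P ρ (Icc 1 (m + 1)) + flagH P ρ (Icc 1 m) =
      (-1) ^ (m + 1) * ∑ x ∈ univ.filter (· ⋖ ⊤), muP P ⊥ x := by
  have hcoatoms : univ.filter (· ⋖ ⊤) = univ.filter fun x : P => ρ x = m + 1 := by
    refine filter_congr fun x _ => ?_
    rw [covBy_iff_rank_eq_add_one hρ hcov le_top, htop]
    omega
  rw [flagH_Icc hρ hbot, flagH_Icc hρ hbot, sum_filter_rank_mem_Icc_succ, hcoatoms]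
  ring

end Graded

lemma extendMon_sum_single {ι : Type*} (g : List Bool → AB) (s : Finset ι)
    (w : ι → FreeMonoid Bool) (c : ι → ℤ) :
    extendMon g (∑ i ∈ s, MonoidAlgebra.single (w i) (c i)) = ∑ i ∈ s, c i • g (w i).toList := by
  rw [extendMon, MonoidAlgebra.coeff_sum]
  exact (Finsupp.sum_finsetSum_index (h := fun m a => a • g (FreeMonoid.toList m))
    (fun _ => zero_smul ℤ _) fun _ a b => add_smul a b _).symm.trans
    (sum_congr rfl fun i _ => Finsupp.sum_single_index (zero_smul ℤ _))

lemma toList_word (n : ℕ) (S : Finset ℕ) :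
    (word n S).toList = List.ofFn fun i : Fin n => decide ((i : ℕ) + 1 ∈ S) :=
  rfl

lemma word_injOn (n : ℕ) : Set.InjOn (word n) {S | S ⊆ Icc 1 n} := by
  intro S hS T hT hST
  have hletters := List.ofFn_injective (congrArg FreeMonoid.toList hST)
  ext k
  by_cases hk : k ∈ Icc 1 n
  · have hk' := mem_Icc.1 hk
    simpa [Nat.sub_add_cancel hk'.1] using congrFun hletters ⟨k - 1, by omega⟩
  · exact iff_of_false (fun h => hk (hS h)) fun h => hk (hT h)

lemma toList_word_Icc_self (n : ℕ) : (word n (Icc 1 n)).toList = List.replicate n true := by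
  refine List.ext_getElem (by simp [toList_word]) fun i hi _ => ?_
  simp only [toList_word, List.getElem_ofFn, List.getElem_replicate, decide_eq_true_eq, mem_Icc]
  have : i < n := by simpa [toList_word] using hi
  omega

lemma toList_word_succ_Icc (m : ℕ) :
    (word (m + 1) (Icc 1 m)).toList = List.replicate m true ++ [false] := by
  rw [toList_word, List.ofFn_succ', ← toList_word_Icc_self, toList_word]
  simp [List.concat_eq_append]

lemma lambdatMon_word_Icc_self (n : ℕ) :
    lambdatMon (word n (Icc 1 n)).toList = (aV - bV) ^ n := by
  rw [lambdatMon, if_pos ⟨n, Or.inl (toList_word_Icc_self n)⟩, toList_word_Icc_self,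
    List.length_replicate]

lemma lambdatMon_word_succ_Icc (m : ℕ) :
    lambdatMon (word (m + 1) (Icc 1 m)).toList = (aV - bV) ^ (m + 1) := by
  rw [lambdatMon, if_pos ⟨m, Or.inr (toList_word_succ_Icc m)⟩, toList_word_succ_Icc]
  simp

lemma lambdatMon_word_eq_zero {n : ℕ} {S : Finset ℕ} (hS : S ⊆ Icc 1 n) (hn : S ≠ Icc 1 n)
    (hpred : S ≠ Icc 1 (n - 1)) : lambdatMon (word n S).toList = 0 := by
  rw [lambdatMon, if_neg]
  rintro ⟨m, hm | hm⟩
  · obtain rfl : m = n := by simpa [toList_word] using (congrArg List.length hm).symm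
    rw [← toList_word_Icc_self] at hm
    exact hn (word_injOn m hS (Subset.refl (Icc 1 m)) (FreeMonoid.toList.injective hm))
  · obtain rfl : n = m + 1 := by simpa [toList_word] using congrArg List.length hm
    rw [← toList_word_succ_Icc] at hm
    exact hpred (word_injOn (m + 1) hS (Icc_subset_Icc_right m.le_succ)
      (FreeMonoid.toList.injective hm))

/-- For a graded poset `P` of rank at least 1,
`λ_t(Ψ(P)) = Z_t(P) ⬝ (a-b)^{ρ(P)-1}`, where
`Z_t(P) = (-1)^{ρ(P)-1} ∑_{x coatom of P} μ(0̂,x)`. -/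
theorem lambdat_Psi (n : ℕ) (P : Type*) [Fintype P] [PartialOrder P]
    [BoundedOrder P] (ρ : P → ℕ)
    (hbot : ρ ⊥ = 0) (htop : ρ ⊤ = n + 1)
    (hstrict : ∀ x y : P, x < y → ρ x < ρ y)
    (hcov : ∀ x y : P, x ⋖ y → ρ y = ρ x + 1) :
    extendMon lambdatMon (Psi P ρ n) =
      ((-1) ^ n * ∑ x ∈ Finset.univ.filter (fun x : P => x ⋖ ⊤), muP P (⊥ : P) x) •
        (aV - bV) ^ n := by
  have hρ : StrictMono ρ := fun x y => hstrict x y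
  have hvanish : ∀ S ∈ (Icc 1 n).powerset, S ≠ Icc 1 n ∧ S ≠ Icc 1 (n - 1) →
      flagH P ρ S • lambdatMon (word n S).toList = 0 := fun S hS hne => by
    rw [lambdatMon_word_eq_zero (mem_powerset.1 hS) hne.1 hne.2, smul_zero]
  rw [Psi, extendMon_sum_single]
  rcases n with _ | m
  · rw [sum_eq_single_of_mem _ (mem_powerset_self _) fun S hS hne => hvanish S hS ⟨hne, hne⟩,
      lambdatMon_word_Icc_self, flagH_Icc_zero hρ hbot hcov htop]
    simp
  · rw [sum_eq_add_of_mem _ _ (mem_powerset_self _)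
        (mem_powerset.2 (Icc_subset_Icc_right m.le_succ)) ?_ hvanish,
      lambdatMon_word_Icc_self, lambdatMon_word_succ_Icc, ← add_smul,
      flagH_Icc_succ_add_flagH_Icc hρ hbot hcov htop]
    exact fun h => by simpa using h.le (right_mem_Icc.2 m.succ_pos)
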